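/- Let d ≥ 1, α ∈ ℝ, c ∈ ℝ and L > 0, and let B : ℝ → ℝ be four times differentiable on (0,L] with B^(k)(t) = (α)_k · c · t^(α−k) + o(t^(α−k)) as t ↓ 0 for each k = 0, 1, 2, 3, 4, where (α)_k = α(α−1)⋯(α−k+1). Then for every u ∈ ℝ^d with 0 < ‖u‖ < L, the iterated partial derivatives Σ_{g=1}^d Σ_{g'=1}^d (∂²/∂u_{g'}²)(∂²/∂u_g²)[B(‖u‖)] exist and satisfy Σ_{g,g'} (∂²/∂u_{g'}²)(∂²/∂u_g²)[B(‖u‖)] = c·M(α,d)·‖u‖^{α−4} + o(‖u‖^{α−4}) as u → 0 with u ≠ 0, where M(α,d) = α(α−2)·[(α−4)·((α−6) + 2d + 4) + 2d + d²]. In particular, for f(u) = ‖u‖^α and every u ≠ 0, Σ_{g=1}^d Σ_{g'=1}^d (∂²/∂u_{g'}²)(∂²/∂u_g²) f(u) = M(α,d)·‖u‖^{α−4}. -/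

import Mathlib

/-! Write `r = ‖u‖`. For radial functions the Laplacian acts as the one-variable operator
`φ ↦ φ'' + (d - 1) φ' / r`, since the Hessian of `φ(‖·‖)` is `φ''` in the radial direction and
`φ' / r` on its orthogonal complement. Applying this operator twice gives
`Δ² [B(‖u‖)] = B'''' + 2(d-1) B''' / r + (d-1)(d-3) (B'' / r² - B' / r³)`, and the double sum of
fourth partial derivatives in the statement is exactly `Δ²`. Substituting
`B⁽ᵏ⁾(r) = (α)ₖ c r^(α-k) + o(r^(α-k))`, every term becomes a multiple of `c r^(α-4)` up to
`o(r^(α-4))`, and the multiples add up to `c M(α,d)`; for `B = t^α` the error terms vanish. -/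

open Filter Asymptotics
open scoped Topology

noncomputable section

/-- The falling factorial `(α)_k = α (α − 1) ⋯ (α − k + 1)`, with `(α)_0 = 1`. -/
def fallingFactorial (α : ℝ) (k : ℕ) : ℝ := ∏ i ∈ Finset.range k, (α - i)

/-- The constant `M(α,d) = α(α−2)[(α−4)((α−6) + 2d + 4) + 2d + d²]`. -/
def Mconst (α : ℝ) (d : ℕ) : ℝ :=
  α * (α - 2) * ((α - 4) * ((α - 6) + 2 * d + 4) + 2 * d + d ^ 2)

/-- The punctured ball `{u : 0 < ‖u‖ < L}` in `ℝ^d`. -/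
def puncturedBall (d : ℕ) (L : ℝ) : Set (EuclideanSpace ℝ (Fin d)) :=
  {u | 0 < ‖u‖ ∧ ‖u‖ < L}

open InnerProductSpace Laplacian Module

section IteratedFDeriv

variable {𝕜 E F : Type*} [NontriviallyNormedField 𝕜] [NormedAddCommGroup E] [NormedSpace 𝕜 E]
  [NormedAddCommGroup F] [NormedSpace 𝕜 F]

theorem iteratedFDeriv_four_apply_eq (f : E → F) (x v w : E) :
    iteratedFDeriv 𝕜 4 f x ![w, w, v, v] =
      iteratedFDeriv 𝕜 2 (iteratedFDeriv 𝕜 2 f) x ![w, w] ![v, v] := by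
  rw [iteratedFDeriv_two_apply, iteratedFDeriv_succ_apply_left, iteratedFDeriv_succ_eq_comp_left]
  exact congr($(ContinuousLinearEquiv.comp_fderiv (𝕜 := 𝕜)
    (continuousMultilinearCurryLeftEquiv 𝕜 (fun _ : Fin 3 => E) F).symm.toContinuousLinearEquiv
    (f := fderiv 𝕜 (iteratedFDeriv 𝕜 2 f)) (x := x)) w ![w, v, v])

theorem ContDiffAt.iteratedFDeriv_two_iteratedFDeriv_two_apply {f : E → F} {x : E}
    (hf : ContDiffAt 𝕜 4 f x) (v w : E) :
    iteratedFDeriv 𝕜 2 (fun y => iteratedFDeriv 𝕜 2 f y ![v, v]) x ![w, w] =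
      iteratedFDeriv 𝕜 4 f x ![w, w, v, v] := by
  rw [iteratedFDeriv_four_apply_eq]
  exact congrArg (· ![w, w]) <|
    (ContinuousMultilinearMap.apply 𝕜 (fun _ : Fin 2 => E) F ![v, v]).iteratedFDeriv_comp_left
      (hf.iteratedFDeriv_right (by norm_num)) le_rfl

end IteratedFDeriv

section IteratedDeriv

variable {𝕜 F : Type*} [NontriviallyNormedField 𝕜] [NormedAddCommGroup F] [NormedSpace 𝕜 F]

theorem ContDiffAt.iteratedDeriv_right {φ : 𝕜 → F} {t : 𝕜} {n m : WithTop ℕ∞} {k : ℕ}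
    (h : ContDiffAt 𝕜 n φ t) (hmn : m + k ≤ n) : ContDiffAt 𝕜 m (iteratedDeriv k φ) t := by
  rw [iteratedDeriv_eq_equiv_comp]
  exact (LinearIsometryEquiv.contDiff _).contDiffAt.comp t (h.iteratedFDeriv_right hmn)

theorem ContDiffAt.hasDerivAt_iteratedDeriv {φ : 𝕜 → F} {t : 𝕜} {n : WithTop ℕ∞} {k : ℕ}
    (h : ContDiffAt 𝕜 n φ t) (hk : k + 1 ≤ n) :
    HasDerivAt (iteratedDeriv k φ) (iteratedDeriv (k + 1) φ t) t := by
  rw [iteratedDeriv_succ]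
  refine ((h.iteratedDeriv_right (m := 1) ?_).differentiableAt one_ne_zero).hasDerivAt
  rwa [add_comm]

end IteratedDeriv

/-- The Laplacian of `y ↦ φ ‖y‖` on an `n`-dimensional space, as an operator on `φ`. -/
def radialLaplacian (n : ℝ) (φ : ℝ → ℝ) (t : ℝ) : ℝ :=
  deriv (deriv φ) t + (n - 1) / t * deriv φ t

/-- `Δ² [φ ‖·‖] = ∑ₖ biharmonicCoeff n k · r ^ (k - 4) · φ⁽ᵏ⁾(r)` with `r = ‖·‖`. -/
def biharmonicCoeff (n : ℝ) : ℕ → ℝ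
  | 1 => (n - 1) * (3 - n)
  | 2 => (n - 1) * (n - 3)
  | 3 => 2 * (n - 1)
  | 4 => 1
  | _ => 0

section RadialLaplacian

variable {n : ℝ} {φ : ℝ → ℝ} {t : ℝ}

theorem radialLaplacian_eq :
    radialLaplacian n φ = fun t => iteratedDeriv 2 φ t + (n - 1) / t * iteratedDeriv 1 φ t := by
  funext t
  simp only [radialLaplacian, iteratedDeriv_succ, iteratedDeriv_zero]

theorem contDiffAt_radialLaplacian (hφ : ContDiffAt ℝ 4 φ t) (ht : t ≠ 0) :
    ContDiffAt ℝ 2 (radialLaplacian n φ) t := by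
  rw [radialLaplacian_eq]
  exact (hφ.iteratedDeriv_right (by norm_num)).add
    ((contDiffAt_const.div contDiffAt_id ht).mul (hφ.iteratedDeriv_right (by norm_num)))

theorem ContDiffAt.hasDerivAt_radialLaplacian (hφ : ContDiffAt ℝ 3 φ t) (ht : t ≠ 0) :
    HasDerivAt (radialLaplacian n φ)
      (iteratedDeriv 3 φ t + ((n - 1) / t * iteratedDeriv 2 φ t
        - (n - 1) / t ^ 2 * iteratedDeriv 1 φ t)) t := by
  rw [radialLaplacian_eq]
  have h := (hφ.hasDerivAt_iteratedDeriv (k := 2) (by norm_num)).fun_add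
    (((hasDerivAt_const t (n - 1)).fun_div (hasDerivAt_id' t) ht).fun_mul
      (hφ.hasDerivAt_iteratedDeriv (k := 1) (by norm_num)))
  refine h.congr_deriv ?_
  ring

theorem ContDiffAt.radialLaplacian_radialLaplacian (hφ : ContDiffAt ℝ 4 φ t) (ht : t ≠ 0) :
    radialLaplacian n (radialLaplacian n φ) t =
      ∑ k ∈ Finset.range 5, biharmonicCoeff n k * t ^ ((k : ℤ) - 4) * iteratedDeriv k φ t := by
  have hderiv : deriv (radialLaplacian n φ) =ᶠ[𝓝 t] fun s => iteratedDeriv 3 φ s +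
      ((n - 1) / s * iteratedDeriv 2 φ s - (n - 1) / s ^ 2 * iteratedDeriv 1 φ s) := by
    filter_upwards [eventually_ne_nhds ht, hφ.eventually (by simp)] with s hs hφs
    exact ((hφs.of_le (by norm_num)).hasDerivAt_radialLaplacian hs).deriv
  have hderiv_at := (hφ.hasDerivAt_iteratedDeriv (k := 3) (by norm_num)).fun_add
    ((((hasDerivAt_const t (n - 1)).fun_div (hasDerivAt_id' t) ht).fun_mul
      (hφ.hasDerivAt_iteratedDeriv (k := 2) (by norm_num))).fun_sub
    (((hasDerivAt_const t (n - 1)).fun_div ((hasDerivAt_id' t).fun_pow 2)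
      (pow_ne_zero 2 ht)).fun_mul (hφ.hasDerivAt_iteratedDeriv (k := 1) (by norm_num))))
  rw [radialLaplacian, hderiv.deriv_eq, hderiv_at.deriv,
    ((hφ.of_le (by norm_num)).hasDerivAt_radialLaplacian ht).deriv]
  simp only [Nat.reduceAdd, iteratedDeriv_succ, iteratedDeriv_zero, zero_mul, mul_one, zero_sub,
    neg_sub, Nat.cast_ofNat, Nat.add_one_sub_one, pow_one, biharmonicCoeff, Finset.sum_range_succ,
    Finset.range_one, Finset.sum_singleton, CharP.cast_eq_zero, Int.reduceNeg, zpow_neg, zpow_ofNat,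
    Nat.cast_one, Int.reduceSub, zero_add, sub_self, pow_zero, one_mul]
  field_simp
  ring

end RadialLaplacian

section RadialFunction

variable {E : Type*} [NormedAddCommGroup E] [InnerProductSpace ℝ E]

theorem hasFDerivAt_norm {x : E} (hx : x ≠ 0) :
    HasFDerivAt (fun y : E => ‖y‖) (‖x‖⁻¹ • innerSL ℝ x) x := by
  have hsq : HasFDerivAt (fun y : E => ‖y‖ ^ 2) (2 • innerSL ℝ x) x := by
    simpa only [id_eq, ContinuousLinearMap.comp_id] using (hasFDerivAt_id x).norm_sq
  have hsqrt := (Real.hasDerivAt_sqrt (pow_pos (norm_pos_iff.mpr hx) 2).ne').comp_hasFDerivAt x hsq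
  simp only [Real.sqrt_sq (norm_nonneg _), Function.comp_def] at hsqrt
  refine hsqrt.congr_fderiv ?_
  rw [← Nat.cast_smul_eq_nsmul ℝ, smul_smul]
  congr 1
  push_cast
  field_simp

theorem HasDerivAt.hasFDerivAt_comp_norm {φ : ℝ → ℝ} {φ' : ℝ} {x : E} (hx : x ≠ 0)
    (hφ : HasDerivAt φ φ' ‖x‖) :
    HasFDerivAt (fun y : E => φ ‖y‖) ((φ' / ‖x‖) • innerSL ℝ x) x := by
  have h := hφ.comp_hasFDerivAt x (hasFDerivAt_norm hx)
  rwa [smul_smul, ← div_eq_mul_inv] at h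

open RealInnerProductSpace in
theorem iteratedFDeriv_two_comp_norm_apply {φ : ℝ → ℝ} {x : E} (hx : x ≠ 0)
    (hφ : ContDiffAt ℝ 2 φ ‖x‖) (e : E) :
    iteratedFDeriv ℝ 2 (fun y => φ ‖y‖) x ![e, e] =
      (deriv (deriv φ) ‖x‖ - deriv φ ‖x‖ / ‖x‖) * (⟪x, e⟫ / ‖x‖) ^ 2
        + deriv φ ‖x‖ / ‖x‖ * ‖e‖ ^ 2 := by
  have hr : ‖x‖ ≠ 0 := norm_ne_zero_iff.mpr hx
  have hfderiv : fderiv ℝ (fun y => φ ‖y‖) =ᶠ[𝓝 x]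
      fun y => (deriv φ ‖y‖ / ‖y‖) • innerSL ℝ y := by
    filter_upwards [eventually_ne_nhds hx,
      (continuous_norm.tendsto x).eventually (hφ.eventually (by simp))] with y hy hφy
    exact ((hφy.differentiableAt (by norm_num)).hasDerivAt.hasFDerivAt_comp_norm hy).fderiv
  have hψ : HasDerivAt (fun t => deriv φ t / t)
      ((deriv (deriv φ) ‖x‖ * ‖x‖ - deriv φ ‖x‖ * 1) / ‖x‖ ^ 2) ‖x‖ := by
    have h1 := hφ.hasDerivAt_iteratedDeriv (k := 1) (by norm_num)
    simp only [iteratedDeriv_succ, iteratedDeriv_zero] at h1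
    exact h1.div (hasDerivAt_id _) hr
  have hG := (hψ.hasFDerivAt_comp_norm hx).fun_smul (innerSL ℝ (E := E)).hasFDerivAt
  have hinner : ∀ a b : E, innerSL ℝ a b = ⟪a, b⟫ := fun _ _ => rfl
  rw [iteratedFDeriv_two_apply, hfderiv.fderiv_eq, hG.fderiv]
  simp only [mul_one, Matrix.cons_val_zero, add_apply, smul_apply,
    ContinuousLinearMap.smulRight_apply, hinner, smul_eq_mul, Matrix.cons_val_one,
    real_inner_self_eq_norm_sq]
  field_simp
  ring

variable [FiniteDimensional ℝ E]

theorem laplacian_comp_norm {φ : ℝ → ℝ} {x : E} (hx : x ≠ 0) (hφ : ContDiffAt ℝ 2 φ ‖x‖) :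
    Δ (fun y : E => φ ‖y‖) x = radialLaplacian (finrank ℝ E) φ ‖x‖ := by
  set b := stdOrthonormalBasis ℝ E
  have hr : ‖x‖ ≠ 0 := norm_ne_zero_iff.mpr hx
  rw [laplacian_eq_iteratedFDeriv_orthonormalBasis _ b]
  simp only [iteratedFDeriv_two_comp_norm_apply hx hφ, b.norm_eq_one, Finset.sum_add_distrib,
    ← Finset.mul_sum, div_pow, ← Finset.sum_div, b.sum_sq_inner_left]
  simp only [one_pow, Finset.sum_const, Finset.card_univ, Fintype.card_fin, nsmul_eq_mul, mul_one,
    radialLaplacian]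
  field_simp
  ring

theorem laplacian_laplacian_comp_norm {φ : ℝ → ℝ} {x : E} (hx : x ≠ 0)
    (hφ : ContDiffAt ℝ 4 φ ‖x‖) :
    Δ (Δ (fun y : E => φ ‖y‖)) x = ∑ k ∈ Finset.range 5,
      biharmonicCoeff (finrank ℝ E) k * ‖x‖ ^ ((k : ℤ) - 4) * iteratedDeriv k φ ‖x‖ := by
  have hr : ‖x‖ ≠ 0 := norm_ne_zero_iff.mpr hx
  have hΔ : Δ (fun y : E => φ ‖y‖) =ᶠ[𝓝 x] fun y => radialLaplacian (finrank ℝ E) φ ‖y‖ := by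
    filter_upwards [eventually_ne_nhds hx,
      (continuous_norm.tendsto x).eventually (hφ.eventually (by simp))] with y hy hφy
    exact laplacian_comp_norm hy (hφy.of_le (by norm_num))
  rw [(laplacian_congr_nhds hΔ).eq_of_nhds,
    laplacian_comp_norm hx (contDiffAt_radialLaplacian hφ hr), hφ.radialLaplacian_radialLaplacian hr]

theorem ContDiffAt.sum_iteratedFDeriv_four_eq_laplacian_laplacian {F : Type*}
    [NormedAddCommGroup F] [NormedSpace ℝ F] {ι : Type*} [Fintype ι]
    (b : OrthonormalBasis ι ℝ E) {f : E → F} {x : E} (hf : ContDiffAt ℝ 4 f x) :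
    ∑ i, ∑ j, iteratedFDeriv ℝ 4 f x ![b j, b j, b i, b i] = Δ (Δ f) x := by
  have h2 : ∀ i, ContDiffAt ℝ 2 (fun y => iteratedFDeriv ℝ 2 f y ![b i, b i]) x := fun i =>
    (ContinuousMultilinearMap.apply ℝ (fun _ : Fin 2 => E) F ![b i, b i]).contDiff.contDiffAt.comp x
      (hf.iteratedFDeriv_right (m := 2) (by norm_num))
  rw [laplacian_eq_iteratedFDeriv_orthonormalBasis (Δ f) b,
    laplacian_eq_iteratedFDeriv_orthonormalBasis f b, Finset.sum_comm]
  simp only [iteratedFDeriv_fun_sum_apply (fun i _ => h2 i), sum_apply,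
    hf.iteratedFDeriv_two_iteratedFDeriv_two_apply]

end RadialFunction

section Euclidean

variable {d : ℕ}

theorem sum_iteratedFDeriv_four_single_comp_norm {φ : ℝ → ℝ} {u : EuclideanSpace ℝ (Fin d)}
    (hu : u ≠ 0) (hφ : ContDiffAt ℝ 4 φ ‖u‖) :
    ∑ g : Fin d, ∑ g' : Fin d,
        iteratedFDeriv ℝ 4 (fun v : EuclideanSpace ℝ (Fin d) => φ ‖v‖) u
          ![EuclideanSpace.single g' (1 : ℝ), EuclideanSpace.single g' (1 : ℝ),
            EuclideanSpace.single g (1 : ℝ), EuclideanSpace.single g (1 : ℝ)] =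
      ∑ k ∈ Finset.range 5, biharmonicCoeff d k * ‖u‖ ^ ((k : ℤ) - 4) * iteratedDeriv k φ ‖u‖ := by
  have hf : ContDiffAt ℝ 4 (fun v : EuclideanSpace ℝ (Fin d) => φ ‖v‖) u :=
    hφ.comp u (contDiffAt_norm ℝ hu)
  simp only [← EuclideanSpace.basisFun_apply (Fin d) ℝ]
  rw [hf.sum_iteratedFDeriv_four_eq_laplacian_laplacian,
    laplacian_laplacian_comp_norm hu hφ, finrank_euclideanSpace_fin]

theorem isOpen_puncturedBall (L : ℝ) : IsOpen (puncturedBall d L) :=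
  isOpen_Ioo.preimage continuous_norm

theorem puncturedBall_mem_nhdsNE {L : ℝ} (hL : 0 < L) : puncturedBall d L ∈ 𝓝[≠] 0 := by
  filter_upwards [self_mem_nhdsWithin, nhdsWithin_le_nhds (Metric.ball_mem_nhds 0 hL)]
    with u hu hu'
  exact ⟨norm_pos_iff.mpr hu, by simpa using hu'⟩

theorem ContDiffOn.contDiffAt_norm_of_mem_puncturedBall {n : WithTop ℕ∞} {B : ℝ → ℝ} {L : ℝ}
    (hB : ContDiffOn ℝ n B (Set.Ioc 0 L)) {u : EuclideanSpace ℝ (Fin d)}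
    (hu : u ∈ puncturedBall d L) : ContDiffAt ℝ n B ‖u‖ :=
  (hB.mono Set.Ioo_subset_Ioc_self).contDiffAt (isOpen_Ioo.mem_nhds hu)

theorem sum_iteratedFDerivWithin_four_single_comp_norm {B : ℝ → ℝ} {L : ℝ}
    (hB : ContDiffOn ℝ 4 B (Set.Ioc 0 L)) {u : EuclideanSpace ℝ (Fin d)}
    (hu : u ∈ puncturedBall d L) :
    ∑ g : Fin d, ∑ g' : Fin d,
        iteratedFDerivWithin ℝ 4 (fun v : EuclideanSpace ℝ (Fin d) => B ‖v‖) (puncturedBall d L) u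
          ![EuclideanSpace.single g' (1 : ℝ), EuclideanSpace.single g' (1 : ℝ),
            EuclideanSpace.single g (1 : ℝ), EuclideanSpace.single g (1 : ℝ)] =
      ∑ k ∈ Finset.range 5, biharmonicCoeff d k * ‖u‖ ^ ((k : ℤ) - 4) *
        iteratedDerivWithin k B (Set.Ioc 0 L) ‖u‖ := by
  have hBu := hB.contDiffAt_norm_of_mem_puncturedBall hu
  simp only [iteratedFDerivWithin_of_isOpen 4 (isOpen_puncturedBall L) hu]
  rw [sum_iteratedFDeriv_four_single_comp_norm (norm_pos_iff.mp hu.1) hBu]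
  refine Finset.sum_congr rfl fun k hk => ?_
  rw [iteratedDerivWithin_eq_iteratedDeriv (uniqueDiffOn_Ioc 0 L)
    (hBu.of_le (mod_cast Nat.lt_succ_iff.mp (Finset.mem_range.mp hk)))
    (Set.Ioo_subset_Ioc_self hu)]

end Euclidean

theorem iteratedDeriv_rpow_const (α t : ℝ) (k : ℕ) :
    iteratedDeriv k (fun t : ℝ => t ^ α) t = fallingFactorial α k * t ^ (α - k) := by
  rw [iteratedDeriv_eq_iterate, Real.iter_deriv_rpow_const, descPochhammer_eval_eq_prod_range]
  rfl

theorem sum_biharmonicCoeff_mul_fallingFactorial (α : ℝ) (d : ℕ) :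
    ∑ k ∈ Finset.range 5, biharmonicCoeff d k * fallingFactorial α k = Mconst α d := by
  simp only [biharmonicCoeff, fallingFactorial, Mconst, Finset.sum_range_succ,
    Finset.prod_range_succ, Finset.sum_range_zero, Finset.prod_range_zero, Nat.cast_zero,
    Nat.cast_one, Nat.cast_ofNat]
  ring

theorem zpow_natCast_sub_mul_rpow {r : ℝ} (hr : 0 < r) (α : ℝ) (k : ℕ) (m : ℤ) :
    r ^ ((k : ℤ) - m) * r ^ (α - k) = r ^ (α - m) := by
  rw [← Real.rpow_intCast, ← Real.rpow_add hr]
  push_cast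
  ring_nf

theorem isLittleO_sum_zpow_mul_sub {α : ℝ} {N : ℕ} {m : ℤ} (a β : ℕ → ℝ) {D : ℕ → ℝ → ℝ}
    (hD : ∀ k < N, (fun t => D k t - β k * t ^ (α - k)) =o[𝓝[>] 0] fun t => t ^ (α - k)) :
    (fun t => ∑ k ∈ Finset.range N, a k * t ^ ((k : ℤ) - m) * D k t
        - (∑ k ∈ Finset.range N, a k * β k) * t ^ (α - m))
      =o[𝓝[>] 0] fun t => t ^ (α - m) := by
  have hterm : ∀ k ∈ Finset.range N,
      (fun t => a k * t ^ ((k : ℤ) - m) * (D k t - β k * t ^ (α - k)))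
        =o[𝓝[>] 0] fun t => t ^ (α - m) := by
    intro k hk
    refine ((isBigO_refl (fun t : ℝ => a k * t ^ ((k : ℤ) - m)) _).mul_isLittleO
      (hD k (Finset.mem_range.mp hk))).trans_isBigO ?_
    refine (isBigO_const_mul_self (a k) _ _).congr' ?_ EventuallyEq.rfl
    filter_upwards [self_mem_nhdsWithin] with t ht
    rw [mul_assoc, zpow_natCast_sub_mul_rpow ht]
  refine (IsLittleO.sum
    (A := fun k t => a k * t ^ ((k : ℤ) - m) * (D k t - β k * t ^ (α - k))) hterm).congr'
    ?_ EventuallyEq.rfl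
  filter_upwards [self_mem_nhdsWithin] with t ht
  rw [Finset.sum_mul, ← Finset.sum_sub_distrib, Finset.sum_apply]
  refine Finset.sum_congr rfl fun k _ => ?_
  rw [← zpow_natCast_sub_mul_rpow ht α k m]
  ring

theorem radial_irregular_iterated_laplacian_general
    (d : ℕ) (α c L : ℝ) (hL : 0 < L)
    (B : ℝ → ℝ)
    (hB : ContDiffOn ℝ 4 B (Set.Ioc 0 L))
    (hBk : ∀ k : ℕ, k ≤ 4 →
      (fun t : ℝ =>
          iteratedDerivWithin k B (Set.Ioc 0 L) t - fallingFactorial α k * c * t ^ (α - k))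
        =o[𝓝[>] (0 : ℝ)] fun t : ℝ => t ^ (α - k)) :
    (ContDiffOn ℝ 4 (fun u : EuclideanSpace ℝ (Fin d) => B ‖u‖) (puncturedBall d L) ∧
      (fun u : EuclideanSpace ℝ (Fin d) =>
          (∑ g : Fin d, ∑ g' : Fin d,
              iteratedFDerivWithin ℝ 4 (fun v : EuclideanSpace ℝ (Fin d) => B ‖v‖)
                (puncturedBall d L) u
                ![EuclideanSpace.single g' (1 : ℝ), EuclideanSpace.single g' (1 : ℝ),
                  EuclideanSpace.single g (1 : ℝ), EuclideanSpace.single g (1 : ℝ)])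
            - c * Mconst α d * ‖u‖ ^ (α - 4))
        =o[𝓝[{u : EuclideanSpace ℝ (Fin d) | u ≠ 0}] 0]
          fun u => ‖u‖ ^ (α - 4)) ∧
    ∀ u : EuclideanSpace ℝ (Fin d), u ≠ 0 →
      (∑ g : Fin d, ∑ g' : Fin d,
          iteratedFDeriv ℝ 4 (fun v : EuclideanSpace ℝ (Fin d) => ‖v‖ ^ α) u
            ![EuclideanSpace.single g' (1 : ℝ), EuclideanSpace.single g' (1 : ℝ),
              EuclideanSpace.single g (1 : ℝ), EuclideanSpace.single g (1 : ℝ)])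
        = Mconst α d * ‖u‖ ^ (α - 4) := by
  refine ⟨⟨fun u hu => ?_, ?_⟩, fun u hu => ?_⟩
  · exact ((hB.contDiffAt_norm_of_mem_puncturedBall hu).comp u
      (contDiffAt_norm ℝ (norm_pos_iff.mp hu.1))).contDiffWithinAt
  · have hsmall := (isLittleO_sum_zpow_mul_sub (N := 5) (m := 4) (biharmonicCoeff d)
      (fun k => fallingFactorial α k * c) fun k hk => hBk k (by omega)).comp_tendsto
        (tendsto_norm_nhdsNE_zero (E := EuclideanSpace ℝ (Fin d)))
    refine hsmall.congr' ?_ (by simp [Function.comp_def])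
    filter_upwards [puncturedBall_mem_nhdsNE hL] with u hu
    simp only [Function.comp_apply, sum_iteratedFDerivWithin_four_single_comp_norm hB hu,
      ← mul_assoc, ← Finset.sum_mul, sum_biharmonicCoeff_mul_fallingFactorial]
    push_cast
    ring
  · have hr : 0 < ‖u‖ := norm_pos_iff.mpr hu
    rw [sum_iteratedFDeriv_four_single_comp_norm hu (Real.contDiffAt_rpow_const_of_ne hr.ne'),
      ← sum_biharmonicCoeff_mul_fallingFactorial, Finset.sum_mul]
    refine Finset.sum_congr rfl fun k _ => ?_
    have h := zpow_natCast_sub_mul_rpow hr α k 4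
    push_cast at h
    rw [iteratedDeriv_rpow_const, ← h]
    ring

/-- Technical Lemma S2 of the paper. If `B` is four times differentiable
on `(0, L]` with `B^(k)(t) = (α)_k c t^{α−k} + o(t^{α−k})` as `t ↓ 0` for `k = 0, …, 4`,
then `u ↦ B(‖u‖)` has fourth-order partial derivatives on `{0 < ‖u‖ < L}` whose double sum
equals `c M(α,d) ‖u‖^{α−4} + o(‖u‖^{α−4})` as `u → 0`; in particular for `f(u) = ‖u‖^α`,
the double sum equals `M(α,d) ‖u‖^{α−4}` exactly, for every `u ≠ 0`. -/
theorem radial_irregular_iterated_laplacian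
    (d : ℕ) (hd : 1 ≤ d) (α c L : ℝ) (hL : 0 < L)
    (B : ℝ → ℝ)
    (hB : ContDiffOn ℝ 4 B (Set.Ioc 0 L))
    (hBk : ∀ k : ℕ, k ≤ 4 →
      (fun t : ℝ =>
          iteratedDerivWithin k B (Set.Ioc 0 L) t - fallingFactorial α k * c * t ^ (α - k))
        =o[𝓝[>] (0 : ℝ)] fun t : ℝ => t ^ (α - k)) :
    (ContDiffOn ℝ 4 (fun u : EuclideanSpace ℝ (Fin d) => B ‖u‖) (puncturedBall d L) ∧
      (fun u : EuclideanSpace ℝ (Fin d) =>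
          (∑ g : Fin d, ∑ g' : Fin d,
              iteratedFDerivWithin ℝ 4 (fun v : EuclideanSpace ℝ (Fin d) => B ‖v‖)
                (puncturedBall d L) u
                ![EuclideanSpace.single g' (1 : ℝ), EuclideanSpace.single g' (1 : ℝ),
                  EuclideanSpace.single g (1 : ℝ), EuclideanSpace.single g (1 : ℝ)])
            - c * Mconst α d * ‖u‖ ^ (α - 4))
        =o[𝓝[{u : EuclideanSpace ℝ (Fin d) | u ≠ 0}] 0]
          fun u => ‖u‖ ^ (α - 4)) ∧
    ∀ u : EuclideanSpace ℝ (Fin d), u ≠ 0 →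
      (∑ g : Fin d, ∑ g' : Fin d,
          iteratedFDeriv ℝ 4 (fun v : EuclideanSpace ℝ (Fin d) => ‖v‖ ^ α) u
            ![EuclideanSpace.single g' (1 : ℝ), EuclideanSpace.single g' (1 : ℝ),
              EuclideanSpace.single g (1 : ℝ), EuclideanSpace.single g (1 : ℝ)])
        = Mconst α d * ‖u‖ ^ (α - 4) :=
  radial_irregular_iterated_laplacian_general d α c L hL B hB hBk
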